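/- (Positive semidefinite completion over the quaternions.) Let A ∈ ℍ^{a×a}, C ∈ ℍ^{c×c}, E ∈ ℍ^{e×e}, B ∈ ℍ^{a×c}, D ∈ ℍ^{c×e}. If the block matrices [[A, B],[B*, C]] and [[C, D],[D*, E]] are positive semidefinite, then there exists X ∈ ℍ^{a×e} such that the block matrix [[A, B, X],[B*, C, D],[X*, D*, E]] ∈ ℍ^{(a+c+e)×(a+c+e)} is positive semidefinite. -/

import Mathlib

noncomputable section

open MeasureTheory Matrix
open scoped ComplexOrder

abbrev Hq : Type := Quaternion ℝ

/-- The image of a complex number in the quaternions via ℂ = ℝ + ℝi. -/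
def Cq (z : ℂ) : Hq := ⟨z.re, z.im, 0, 0⟩

def qj : Hq := ⟨0, 0, 1, 0⟩

/-- cos (n t) + i sin (n t) as a quaternion. -/
def eint (n : ℤ) (t : ℝ) : Hq := ⟨Real.cos (n * t), Real.sin (n * t), 0, 0⟩

/-- Positive semidefiniteness for quaternionic matrices. -/
def QPosSemidef {m : Type*} [Fintype m] (M : Matrix m m Hq) : Prop :=
  M.conjTranspose = M ∧
    ∀ x : m → Hq, ∃ c : ℝ, 0 ≤ c ∧ dotProduct (star x) (M.mulVec x) = (c : Hq)

def qToeplitz {s : ℕ} (r : ℤ → Matrix (Fin s) (Fin s) Hq) (N : ℕ) :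
    Matrix (Fin (N+1) × Fin s) (Fin (N+1) × Fin s) Hq :=
  Matrix.of fun p q => r ((p.1 : ℤ) - (q.1 : ℤ)) p.2 q.2

def IsPosDefSeq {s : ℕ} (r : ℤ → Matrix (Fin s) (Fin s) Hq) : Prop :=
  ∀ N : ℕ, QPosSemidef (qToeplitz r N)

/-- A q-positive measure on [0,2π] in density form. -/
structure QPosDensity (s : ℕ) where
  σ : Measure ℝ
  P11 : ℝ → Matrix (Fin s) (Fin s) ℂ
  P12 : ℝ → Matrix (Fin s) (Fin s) ℂ
  P22 : ℝ → Matrix (Fin s) (Fin s) ℂ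
  finite : IsFiniteMeasure σ
  support : σ (Set.Icc (0:ℝ) (2*Real.pi))ᶜ = 0
  refl : Measure.map (fun t => 2*Real.pi - t) σ = σ
  integrable : ∀ i j, Integrable (fun t => P11 t i j) σ ∧
      Integrable (fun t => P12 t i j) σ ∧ Integrable (fun t => P22 t i j) σ
  posSemidef_ae : ∀ᵐ t ∂σ,
      (Matrix.fromBlocks (P11 t) (P12 t) (P12 t).conjTranspose (P22 t)).PosSemidef
  cond22 : ∀ᵐ t ∂σ, P22 t = (P11 (2*Real.pi - t)).map (starRingEnd ℂ)
  cond12 : ∀ᵐ t ∂σ, P12 t = - (P12 (2*Real.pi - t)).transpose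

/-- The moment of a q-positive density measure, entrywise Bochner integral. -/
def QPosDensity.moment {s : ℕ} (μ : QPosDensity s) (n : ℤ) :
    Matrix (Fin s) (Fin s) Hq :=
  Matrix.of fun i j =>
    ∫ t in Set.Icc (0:ℝ) (2*Real.pi),
      eint n t * (Cq (μ.P11 t i j) + Cq (μ.P12 t i j) * qj) ∂μ.σ


/-! Regularize the middle block: for `ε > 0` the matrix `N = C + ε I` has quadratic form at least
`ε ‖x‖²`, hence is invertible, and with `X = B N⁻¹ D` the form of `[[A, B, X], [B*, N, D],
[X*, D*, E]]` at `(x₁, x₂, x₃)` is the sum of the form of `N` at `x₂ + N⁻¹ (B* x₁ + D x₃)` and the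
forms of the two (regularized) given blocks at `(x₁, -N⁻¹ B* x₁)` and `(-N⁻¹ D x₃, x₃)`.
The `2 × 2` principal minors bound `‖X i k‖²` by `A i i * E k k` independently of `ε`, so the
completions have a cluster point as `ε → 0`, and positive semidefiniteness, a closed condition,
passes to it. -/

open Filter Topology

instance : StarModule ℝ Hq := ⟨fun r q => by rw [Quaternion.star_smul, star_trivial r]⟩

namespace Matrix

variable {l m n α : Type*}

def hermFromBlocks₃ [Star α] (A : Matrix l l α) (B : Matrix l m α) (X : Matrix l n α)
    (C : Matrix m m α) (D : Matrix m n α) (E : Matrix n n α) :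
    Matrix ((l ⊕ m) ⊕ n) ((l ⊕ m) ⊕ n) α :=
  fromBlocks (fromBlocks A B Bᴴ C) (fromRows X D) (fromCols Xᴴ Dᴴ) E

theorem conjTranspose_hermFromBlocks₃ [InvolutiveStar α] (A : Matrix l l α) (B : Matrix l m α)
    (X : Matrix l n α) (C : Matrix m m α) (D : Matrix m n α) (E : Matrix n n α) :
    (hermFromBlocks₃ A B X C D E)ᴴ = hermFromBlocks₃ Aᴴ B X Cᴴ D Eᴴ := by
  simp [hermFromBlocks₃, fromBlocks_conjTranspose,
    conjTranspose_fromCols_eq_fromRows_conjTranspose,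
    conjTranspose_fromRows_eq_fromCols_conjTranspose]

theorem _root_.Continuous.matrix_hermFromBlocks₃ {Z : Type*} [TopologicalSpace Z]
    [TopologicalSpace α] [Star α] [ContinuousStar α] (A : Matrix l l α) (B : Matrix l m α)
    {X : Z → Matrix l n α} {C : Z → Matrix m m α} (D : Matrix m n α) (E : Matrix n n α)
    (hX : Continuous X) (hC : Continuous C) :
    Continuous fun z => hermFromBlocks₃ A B (X z) (C z) D E := by
  refine continuous_matrix ?_
  rintro ((i | i) | i) ((j | j) | j) <;> simp [hermFromBlocks₃] <;> fun_prop

variable [Fintype l] [Fintype m] [Fintype n]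

section Semiring

variable [Semiring α]

theorem star_single_dotProduct_mulVec_single [StarRing α] [DecidableEq m] (M : Matrix m m α)
    (i j : m) (p q : α) :
    star (Pi.single i p) ⬝ᵥ M *ᵥ Pi.single j q = star p * M i j * q := by
  simp [mulVec_single, single_dotProduct, mul_assoc]

variable [Star α]

theorem star_sumElim_dotProduct_fromBlocks_mulVec
    (P : Matrix l l α) (Q : Matrix l m α) (R : Matrix m l α) (S : Matrix m m α)
    (y : l → α) (z : m → α) :
    star (Sum.elim y z) ⬝ᵥ fromBlocks P Q R S *ᵥ Sum.elim y z =
      star y ⬝ᵥ P *ᵥ y + star y ⬝ᵥ Q *ᵥ z + star z ⬝ᵥ R *ᵥ y + star z ⬝ᵥ S *ᵥ z := by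
  simp only [Function.star_sumElim, fromBlocks_mulVec, sumElim_dotProduct_sumElim,
    dotProduct_add]
  abel

theorem star_sumElim_dotProduct_hermFromBlocks₃_mulVec (A : Matrix l l α) (B : Matrix l m α)
    (X : Matrix l n α) (C : Matrix m m α) (D : Matrix m n α) (E : Matrix n n α)
    (x₁ : l → α) (x₂ : m → α) (x₃ : n → α) :
    star (Sum.elim (Sum.elim x₁ x₂) x₃) ⬝ᵥ hermFromBlocks₃ A B X C D E *ᵥ
        Sum.elim (Sum.elim x₁ x₂) x₃ =
      star x₁ ⬝ᵥ A *ᵥ x₁ + star x₁ ⬝ᵥ B *ᵥ x₂ + star x₁ ⬝ᵥ X *ᵥ x₃ +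
      star x₂ ⬝ᵥ Bᴴ *ᵥ x₁ + star x₂ ⬝ᵥ C *ᵥ x₂ + star x₂ ⬝ᵥ D *ᵥ x₃ +
      star x₃ ⬝ᵥ Xᴴ *ᵥ x₁ + star x₃ ⬝ᵥ Dᴴ *ᵥ x₂ + star x₃ ⬝ᵥ E *ᵥ x₃ := by
  rw [hermFromBlocks₃, star_sumElim_dotProduct_fromBlocks_mulVec,
    star_sumElim_dotProduct_fromBlocks_mulVec]
  simp only [fromRows_mulVec, fromCols_mulVec_sumElim, Function.star_sumElim,
    sumElim_dotProduct_sumElim, dotProduct_add]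
  abel

end Semiring

theorem star_sumElim_dotProduct_hermFromBlocks₃_mul_invOf_mul_mulVec [Ring α] [StarRing α] [DecidableEq m]
    {A : Matrix l l α} {B : Matrix l m α} {N : Matrix m m α} [Invertible N] {D : Matrix m n α}
    {E : Matrix n n α} (hN : Nᴴ = N) (x₁ : l → α) (x₂ : m → α) (x₃ : n → α) :
    let y := ⅟N *ᵥ (Bᴴ *ᵥ x₁)
    let z := ⅟N *ᵥ (D *ᵥ x₃)
    star (Sum.elim (Sum.elim x₁ x₂) x₃) ⬝ᵥ hermFromBlocks₃ A B (B * ⅟N * D) N D E *ᵥ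
        Sum.elim (Sum.elim x₁ x₂) x₃ =
      star (x₂ + y + z) ⬝ᵥ N *ᵥ (x₂ + y + z) +
      star (Sum.elim x₁ (-y)) ⬝ᵥ fromBlocks A B Bᴴ N *ᵥ Sum.elim x₁ (-y) +
      star (Sum.elim (-z) x₃) ⬝ᵥ fromBlocks N D Dᴴ E *ᵥ Sum.elim (-z) x₃ := by
  have hinv : (⅟N)ᴴ = ⅟N := IsSelfAdjoint.invOf N hN
  intro y z
  rw [star_sumElim_dotProduct_hermFromBlocks₃_mulVec, star_sumElim_dotProduct_fromBlocks_mulVec,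
    star_sumElim_dotProduct_fromBlocks_mulVec]
  simp only [y, z, star_add, star_neg, star_mulVec, ← dotProduct_mulVec, mulVec_add, mulVec_neg,
    mulVec_mulVec, dotProduct_add, add_dotProduct, dotProduct_neg, neg_dotProduct,
    conjTranspose_mul, conjTranspose_conjTranspose, hinv, Matrix.mul_assoc,
    Matrix.mul_invOf_cancel_left, invOf_mul_self, Matrix.mul_one]
  abel

def reForm (M : Matrix m m Hq) : LinearMap.BilinForm ℝ (m → Hq) :=
  LinearMap.mk₂ ℝ (fun u w => (star u ⬝ᵥ M *ᵥ w).re)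
    (fun u u' w => by simp [add_dotProduct])
    (fun r u w => by simp [star_smul, smul_dotProduct])
    (fun u w w' => by simp [mulVec_add, dotProduct_add])
    (fun r u w => by simp [mulVec_smul, dotProduct_smul])

variable [DecidableEq m]

theorem re_star_dotProduct_diagonal_mulVec (d : m → ℝ) (x : m → Hq) :
    (star x ⬝ᵥ diagonal (fun i => (d i : Hq)) *ᵥ x).re = ∑ i, d i * ‖x i‖ ^ 2 := by
  have hterm (i : m) : star (x i) * ((d i : Hq) * x i) = ((d i * ‖x i‖ ^ 2 : ℝ) : Hq) := by
    rw [Quaternion.coe_mul_eq_smul, mul_smul_comm, Quaternion.star_mul_self,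
      Quaternion.normSq_eq_norm_mul_self, ← sq, ← Quaternion.coe_mul_eq_smul, Quaternion.coe_mul]
  simp only [mulVec_diagonal, dotProduct, Pi.star_apply, hterm]
  exact map_sum (QuaternionAlgebra.reₗ _ _ _) _ _

theorem isUnit_of_forall_re_pos {N : Matrix m m Hq}
    (hN : ∀ x ≠ 0, 0 < (star x ⬝ᵥ N *ᵥ x).re) : IsUnit N := by
  have hinj : Function.Injective (LinearMap.mulLeft ℝ N) := by
    refine (injective_iff_map_eq_zero _).mpr fun X hX => ?_
    refine Matrix.ext fun i j => ?_
    by_contra hij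
    have hcol : N *ᵥ (fun k => X k j) = 0 := funext fun k => congrFun₂ hX k j
    have hpos := hN (fun k => X k j) (fun h => hij (congrFun h i))
    rw [hcol, dotProduct_zero] at hpos
    exact lt_irrefl _ hpos
  obtain ⟨N', hN'⟩ := LinearMap.injective_iff_surjective.mp hinj 1
  exact IsUnit.of_mul_eq_one N' hN'

end Matrix

namespace QPosSemidef

variable {l m n : Type*} [Fintype l] [Fintype m] [Fintype n]

theorem iff_re {M : Matrix m m Hq} :
    QPosSemidef M ↔ Mᴴ = M ∧ ∀ x, 0 ≤ (star x ⬝ᵥ M *ᵥ x).re := by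
  refine and_congr_right fun hM => forall_congr' fun x => ?_
  have hself : star (star x ⬝ᵥ M *ᵥ x) = star x ⬝ᵥ M *ᵥ x := by
    rw [← star_dotProduct_star, star_star, star_mulVec, hM, ← dotProduct_mulVec]
  constructor
  · rintro ⟨c, hc, hx⟩
    simpa [hx] using hc
  · exact fun hx => ⟨_, hx, Quaternion.star_eq_self.mp hself⟩

theorem isClosed_setOf : IsClosed {M : Matrix m m Hq | QPosSemidef M} := by
  simp_rw [iff_re, Set.ofPred_and, Set.ofPred_forall]
  exact (isClosed_eq (by fun_prop) continuous_id).inter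
    (isClosed_iInter fun x =>
      isClosed_le continuous_const (Quaternion.continuous_re.comp (by fun_prop)))

theorem add {M N : Matrix m m Hq} (hM : QPosSemidef M) (hN : QPosSemidef N) :
    QPosSemidef (M + N) := by
  rw [iff_re] at *
  refine ⟨by rw [conjTranspose_add, hM.1, hN.1], fun x => ?_⟩
  simpa [add_mulVec, dotProduct_add] using add_nonneg (hM.2 x) (hN.2 x)

theorem re_dotProduct_sq_le {M : Matrix m m Hq} (hM : QPosSemidef M) (u w : m → Hq) :
    (star u ⬝ᵥ M *ᵥ w).re ^ 2 ≤ (star u ⬝ᵥ M *ᵥ u).re * (star w ⬝ᵥ M *ᵥ w).re := by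
  rw [iff_re] at hM
  refine (reForm M).apply_sq_le_of_symm hM.2 ⟨fun u w => ?_⟩ u w
  change (star u ⬝ᵥ M *ᵥ w).re = (star w ⬝ᵥ M *ᵥ u).re
  rw [← Quaternion.re_star, ← star_dotProduct_star, star_star, star_mulVec, hM.1,
    ← dotProduct_mulVec]

theorem norm_apply_sq_le {M : Matrix m m Hq} (hM : QPosSemidef M) (i j : m) :
    ‖M i j‖ ^ 2 ≤ (M i i).re * (M j j).re := by
  classical
  have hdiag (k : m) : 0 ≤ (M k k).re := by
    simpa [star_single_dotProduct_mulVec_single] using (iff_re.mp hM).2 (Pi.single k 1)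
  have hreal : M j j = ((M j j).re : Hq) := by
    rw [← Quaternion.star_eq_self]
    exact congrFun₂ hM.1 j j
  have h := hM.re_dotProduct_sq_le (Pi.single i 1) (Pi.single j (star (M i j)))
  simp only [star_single_dotProduct_mulVec_single, star_one, one_mul, mul_one, star_star] at h
  rw [hreal, Quaternion.mul_coe_eq_smul, smul_mul_assoc, Quaternion.self_mul_star] at h
  simp only [Quaternion.re_coe, Quaternion.re_smul, Quaternion.normSq_eq_norm_mul_self,
    smul_eq_mul, ← sq] at h
  nlinarith [mul_nonneg (hdiag i) (hdiag j), sq_nonneg ‖M i j‖]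

theorem fromBlocks₁₁ {P : Matrix l l Hq} {Q : Matrix l m Hq} {R : Matrix m l Hq}
    {S : Matrix m m Hq} (h : QPosSemidef (fromBlocks P Q R S)) : QPosSemidef P := by
  rw [iff_re] at h ⊢
  refine ⟨by simpa [fromBlocks_conjTranspose] using congrArg toBlocks₁₁ h.1, fun y => ?_⟩
  simpa [star_sumElim_dotProduct_fromBlocks_mulVec] using h.2 (Sum.elim y 0)

theorem fromBlocks₂₂ {P : Matrix l l Hq} {Q : Matrix l m Hq} {R : Matrix m l Hq}
    {S : Matrix m m Hq} (h : QPosSemidef (fromBlocks P Q R S)) : QPosSemidef S := by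
  rw [iff_re] at h ⊢
  refine ⟨by simpa [fromBlocks_conjTranspose] using congrArg toBlocks₂₂ h.1, fun z => ?_⟩
  simpa [star_sumElim_dotProduct_fromBlocks_mulVec] using h.2 (Sum.elim 0 z)

theorem hermFromBlocks₃_of_invertible [DecidableEq m] {A : Matrix l l Hq} {B : Matrix l m Hq}
    {N : Matrix m m Hq} [Invertible N] {D : Matrix m n Hq} {E : Matrix n n Hq}
    (h₁ : QPosSemidef (fromBlocks A B Bᴴ N)) (h₂ : QPosSemidef (fromBlocks N D Dᴴ E)) :
    QPosSemidef (hermFromBlocks₃ A B (B * ⅟N * D) N D E) := by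
  have hN := iff_re.mp h₁.fromBlocks₂₂
  refine iff_re.mpr ⟨?_, fun x => ?_⟩
  · rw [conjTranspose_hermFromBlocks₃, h₁.fromBlocks₁₁.1, hN.1, h₂.fromBlocks₂₂.1]
  rw [← Sum.elim_comp_inl_inr x, ← Sum.elim_comp_inl_inr (x ∘ Sum.inl),
    star_sumElim_dotProduct_hermFromBlocks₃_mul_invOf_mul_mulVec hN.1, Quaternion.re_add, Quaternion.re_add]
  exact add_nonneg (add_nonneg (hN.2 _) ((iff_re.mp h₁).2 _)) ((iff_re.mp h₂).2 _)

theorem norm_sq_le_of_hermFromBlocks₃ {A : Matrix l l Hq} {B : Matrix l m Hq}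
    {X : Matrix l n Hq} {C : Matrix m m Hq} {D : Matrix m n Hq} {E : Matrix n n Hq}
    (h : QPosSemidef (hermFromBlocks₃ A B X C D E)) (i : l) (k : n) :
    ‖X i k‖ ^ 2 ≤ (A i i).re * (E k k).re := by
  simpa [hermFromBlocks₃] using h.norm_apply_sq_le (Sum.inl (Sum.inl i)) (Sum.inr k)

variable [DecidableEq l] [DecidableEq m]

theorem diagonal_ofReal {d : m → ℝ} (hd : 0 ≤ d) :
    QPosSemidef (diagonal fun i => (d i : Hq)) := by
  refine iff_re.mpr ⟨by simp [diagonal_conjTranspose], fun x => ?_⟩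
  rw [re_star_dotProduct_diagonal_mulVec]
  exact Finset.sum_nonneg fun i _ => mul_nonneg (hd i) (sq_nonneg _)

theorem isUnit_add_diagonal {C : Matrix m m Hq} (h : QPosSemidef C) {ε : ℝ} (hε : 0 < ε) :
    IsUnit (C + diagonal fun _ => (ε : Hq)) := by
  refine isUnit_of_forall_re_pos fun x hx => ?_
  obtain ⟨i, hi⟩ := Function.ne_iff.mp hx
  rw [add_mulVec, dotProduct_add, Quaternion.re_add, re_star_dotProduct_diagonal_mulVec]
  refine add_pos_of_nonneg_of_pos ((iff_re.mp h).2 x) ?_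
  have hxi : 0 < ‖x i‖ := norm_pos_iff.mpr hi
  exact Finset.sum_pos' (fun j _ => by positivity) ⟨i, Finset.mem_univ i, by positivity⟩

theorem fromBlocks_add_diagonal₁₁ {P : Matrix l l Hq} {Q : Matrix l m Hq} {R : Matrix m l Hq}
    {S : Matrix m m Hq} (h : QPosSemidef (fromBlocks P Q R S)) {d : l → ℝ} (hd : 0 ≤ d) :
    QPosSemidef (fromBlocks (P + diagonal fun i => (d i : Hq)) Q R S) := by
  have hsplit : fromBlocks (P + diagonal fun i => (d i : Hq)) Q R S =
      fromBlocks P Q R S + diagonal fun i => ((Sum.elim d 0 i : ℝ) : Hq) := by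
    ext (i | i) (j | j) <;> simp [diagonal_apply]
  refine hsplit ▸ h.add (diagonal_ofReal ?_)
  rw [← Sum.elim_zero_zero]
  exact Sum.elim_le_elim_iff.mpr ⟨hd, le_rfl⟩

theorem fromBlocks_add_diagonal₂₂ {P : Matrix l l Hq} {Q : Matrix l m Hq} {R : Matrix m l Hq}
    {S : Matrix m m Hq} (h : QPosSemidef (fromBlocks P Q R S)) {d : m → ℝ} (hd : 0 ≤ d) :
    QPosSemidef (fromBlocks P Q R (S + diagonal fun i => (d i : Hq))) := by
  have hsplit : fromBlocks P Q R (S + diagonal fun i => (d i : Hq)) =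
      fromBlocks P Q R S + diagonal fun i => ((Sum.elim 0 d i : ℝ) : Hq) := by
    ext (i | i) (j | j) <;> simp [diagonal_apply]
  refine hsplit ▸ h.add (diagonal_ofReal ?_)
  rw [← Sum.elim_zero_zero]
  exact Sum.elim_le_elim_iff.mpr ⟨le_rfl, hd⟩

end QPosSemidef

theorem IsCompact.exists_prodMk_mem_of_tendsto {ι X Y : Type*} [TopologicalSpace X]
    [TopologicalSpace Y] {l : Filter ι} [l.NeBot] {K : Set X} {S : Set (X × Y)} {f : ι → X}
    {g : ι → Y} {y : Y} (hK : IsCompact K) (hS : IsClosed S) (hfK : ∀ i, f i ∈ K)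
    (hg : Tendsto g l (𝓝 y)) (hfg : ∀ i, (f i, g i) ∈ S) : ∃ x, (x, y) ∈ S := by
  obtain ⟨x, -, hx⟩ := hK.exists_mapClusterPt (f := l) (tendsto_principal.mpr (.of_forall hfK))
  refine ⟨x, hS.mem_of_mapClusterPt (f := fun i => (f i, g i)) (b := l) ?_ (.of_forall hfg)⟩
  rw [mapClusterPt_iff_frequently] at hx ⊢
  intro s hs
  obtain ⟨u, hu, v, hv, huv⟩ := mem_nhds_prod_iff.mp hs
  exact ((hx u hu).and_eventually (hg hv)).mono fun i hi => huv ⟨hi.1, hi.2⟩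

/-- positive semidefinite completion over the quaternions. -/
theorem quaternionic_posSemidef_completion {a c e : ℕ}
    (A : Matrix (Fin a) (Fin a) Hq) (C : Matrix (Fin c) (Fin c) Hq)
    (E : Matrix (Fin e) (Fin e) Hq)
    (B : Matrix (Fin a) (Fin c) Hq) (D : Matrix (Fin c) (Fin e) Hq)
    (h1 : QPosSemidef (Matrix.fromBlocks A B B.conjTranspose C))
    (h2 : QPosSemidef (Matrix.fromBlocks C D D.conjTranspose E)) :
    ∃ X : Matrix (Fin a) (Fin e) Hq,
      QPosSemidef (Matrix.fromBlocks
        (Matrix.fromBlocks A B B.conjTranspose C)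
        (Matrix.fromRows X D)
        (Matrix.fromCols X.conjTranspose D.conjTranspose) E) := by
  let Cε (ε : ℝ) : Matrix (Fin c) (Fin c) Hq := C + diagonal fun _ => (ε : Hq)
  have hreg (k : ℕ) : ∃ X, QPosSemidef (hermFromBlocks₃ A B X (Cε (1 / (k + 1))) D E) := by
    have hε : (0 : ℝ) < 1 / (k + 1) := by positivity
    have := (h1.fromBlocks₂₂.isUnit_add_diagonal hε).invertible
    exact ⟨_, (h1.fromBlocks_add_diagonal₂₂ fun _ => hε.le).hermFromBlocks₃_of_invertible
      (h2.fromBlocks_add_diagonal₁₁ fun _ => hε.le)⟩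
  choose X hX using hreg
  have hCε : Tendsto (fun k : ℕ => Cε (1 / (k + 1))) atTop (𝓝 C) := by
    have hcont : Continuous Cε :=
      continuous_const.add (continuous_pi fun _ => Quaternion.continuous_coe).matrix_diagonal
    have hC : Cε 0 = C := by simp [Cε]
    exact hC ▸ (hcont.tendsto 0).comp tendsto_one_div_add_atTop_nhds_zero_nat
  have hK : IsCompact (Set.univ.pi fun i => Set.univ.pi fun k =>
      Metric.closedBall (0 : Hq) √((A i i).re * (E k k).re)) :=
    isCompact_univ_pi fun i => isCompact_univ_pi fun k => isCompact_closedBall _ _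
  refine hK.exists_prodMk_mem_of_tendsto (QPosSemidef.isClosed_setOf.preimage
      (continuous_fst.matrix_hermFromBlocks₃ A B D E continuous_snd))
    (fun k i _ j _ => ?_) hCε fun k => hX k
  exact mem_closedBall_zero_iff.mpr
    (Real.le_sqrt_of_sq_le ((hX k).norm_sq_le_of_hermFromBlocks₃ i j))
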